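/- Let X and Y be real Banach spaces, L(X*,Y) the space of bounded linear operators from the dual X* to Y equipped with the operator norm, let t > 0, let x : [0,∞) → L(X*,Y) be cadlag (right-continuous with left limits in operator norm), and let y* : [0,∞) → X* be cadlag with finite total variation T_t(y*) := sup_σ Σ_i ‖y*(t_i) − y*(t_{i−1})‖_{X*} < ∞ over finite partitions σ of [0,t]. Then the Y-valued Riemann–Stieltjes sums converge as the mesh tends to zero: there exists L ∈ Y such that for every ε > 0 there is δ > 0 so that for every finite partition 0 = t_0 < t_1 < ⋯ < t_m = t with max_i (t_{i+1} − t_i) < δ, one has ‖Σ_{i=0}^{m−1} x(t_i)(y*(t_{i+1}) − y*(t_i)) − L‖_Y < ε. -/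

import Mathlib

open Filter Set

/-- A function on `[0,∞)` (modelled as a function on `ℝ`) with values in a
topological space is cadlag if it is right-continuous at every point of `[0,∞)`
and has left limits at every point of `(0,∞)`. -/
def IsCadlag {E : Type*} [TopologicalSpace E] (f : ℝ → E) : Prop :=
  (∀ s : ℝ, 0 ≤ s → ContinuousWithinAt f (Set.Ici s) s) ∧
  (∀ s : ℝ, 0 < s → ∃ L : E, Tendsto f (nhdsWithin s (Set.Iio s)) (nhds L))

/-- A finite partition `0 = τ 0 < τ 1 < ⋯ < τ m = t` of the interval `[0,t]`. -/
structure IntervalPartition (t : ℝ) where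
  m : ℕ
  τ : ℕ → ℝ
  m_pos : 0 < m
  first : τ 0 = 0
  last : τ m = t
  increasing : ∀ i < m, τ i < τ (i + 1)

/-!
The sums form a Cauchy net as the mesh tends to `0`. The bound `V` makes `y*` of bounded
variation on `[0, t]`; being right-continuous, `y*` then has small variation on `[u, u + D]` for
small `D`. A cadlag `x` is bounded on `[0, t]` and, for every `ε > 0`, oscillates by at most `ε` on
each open interval of a suitable partition `U`. If `ρ` refines a partition `σ` of mesh `< δ`, the
sum over `σ` is the sum over `ρ` with each tag `x(ρᵢ)` replaced by `x` at the last point of `σ`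
not exceeding `ρᵢ`. This changes the `i`-th term by at most `ε ‖Δᵢ y*‖` unless a point of `U`
lies in between; such steps lie within `δ` to the right of one of the finitely many points of
`U`, so their total variation is small. Two fine partitions are compared through a common
refinement, and completeness of `Y` provides the limit.
-/

open scoped Topology ENNReal

theorem ENNReal.ofReal_sum_norm_sub {ι E : Type*} [NormedAddCommGroup E] (I : Finset ι)
    (f g : ι → E) : ENNReal.ofReal (∑ i ∈ I, ‖f i - g i‖) = ∑ i ∈ I, edist (f i) (g i) := by
  rw [ENNReal.ofReal_sum_of_nonneg fun _ _ => norm_nonneg _]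
  simp only [edist_dist, dist_eq_norm]

theorem Finset.sum_filter_exists_le {ι κ M : Type*} [AddCommMonoid M] [PartialOrder M]
    [IsOrderedAddMonoid M] (s : Finset ι) (C : Finset κ) (G : κ → ι → Prop)
    [∀ p, DecidablePred (G p)] [DecidablePred fun i => ∃ p ∈ C, G p i] {f : ι → M}
    (hf : ∀ i ∈ s, 0 ≤ f i) :
    ∑ i ∈ s.filter (fun i => ∃ p ∈ C, G p i), f i ≤ ∑ p ∈ C, ∑ i ∈ s.filter (G p), f i := by
  have hite : ∀ i ∈ s, ∀ p, 0 ≤ if G p i then f i else 0 := fun i hi p => by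
    split_ifs
    exacts [hf i hi, le_rfl]
  calc ∑ i ∈ s.filter (fun i => ∃ p ∈ C, G p i), f i
      ≤ ∑ i ∈ s.filter (fun i => ∃ p ∈ C, G p i), ∑ p ∈ C, if G p i then f i else 0 := by
        refine Finset.sum_le_sum fun i hi => ?_
        obtain ⟨hi, p, hp, hG⟩ := Finset.mem_filter.1 hi
        calc f i = if G p i then f i else 0 := (if_pos hG).symm
          _ ≤ _ := Finset.single_le_sum (fun p _ => hite i hi p) hp
    _ ≤ ∑ i ∈ s, ∑ p ∈ C, if G p i then f i else 0 :=
        Finset.sum_le_sum_of_subset_of_nonneg (Finset.filter_subset _ _)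
          fun i hi _ => Finset.sum_nonneg fun p _ => hite i hi p
    _ = ∑ p ∈ C, ∑ i ∈ s.filter (G p), f i := by
        rw [Finset.sum_comm]
        simp only [Finset.sum_filter]

theorem mul_div_two_mul_add_one_le {a ε : ℝ} (ha : 0 ≤ a) (hε : 0 ≤ ε) :
    a * (ε / (2 * (a + 1))) ≤ ε / 2 := by
  rw [← mul_div_assoc, div_le_div_iff₀ (by positivity) two_pos]
  nlinarith

theorem Filter.Tendsto.exists_mem_forall_dist_le {α F : Type*} [PseudoMetricSpace F]
    {x : α → F} {l : Filter α} {c : F} (h : Tendsto x l (𝓝 c)) {ε : ℝ} (hε : 0 < ε) :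
    ∃ S ∈ l, ∀ a ∈ S, ∀ b ∈ S, dist (x a) (x b) ≤ ε :=
  ⟨x ⁻¹' Metric.ball c (ε / 2), h (Metric.ball_mem_nhds c (half_pos hε)), fun _ ha _ hb =>
    (dist_triangle_right _ _ c).trans (by linarith [Metric.mem_ball.1 ha, Metric.mem_ball.1 hb])⟩

theorem BoundedVariationOn.eventually_eVariationOn_Icc_lt {E : Type*} [PseudoEMetricSpace E]
    {y : ℝ → E} {a b u : ℝ} (hy : BoundedVariationOn y (Icc a b)) (hu : u ∈ Icc a b)
    (hrc : ContinuousWithinAt y (Ici u) u) {e : ℝ≥0∞} (he : 0 < e) :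
    ∀ᶠ D in 𝓝[>] 0, eVariationOn y (Icc u (min (u + D) b)) < e := by
  have hsmall := (hy.tendsto_eVariationOn_Icc_zero_right u (hrc.mono inter_subset_right)).eventually
    (gt_mem_nhds he)
  have hlim : Tendsto (fun D => min (u + D) b) (𝓝[>] 0) (𝓝[Icc a b] u) := by
    refine tendsto_nhdsWithin_iff.2 ⟨?_, eventually_nhdsWithin_of_forall fun D hD => ?_⟩
    · have hcont : Continuous fun D : ℝ => min (u + D) b := by fun_prop
      exact (hcont.tendsto' 0 u (by simp [hu.2])).mono_left nhdsWithin_le_nhds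
    · exact ⟨le_min (by linarith [hu.1, mem_Ioi.1 hD]) (hu.1.trans hu.2), min_le_right _ _⟩
  filter_upwards [hlim.eventually hsmall] with D hD
  rwa [inter_eq_right.2 (Icc_subset_Icc hu.1 (min_le_right _ _))] at hD

namespace IntervalPartition

section Basic

variable {t : ℝ} (P : IntervalPartition t)

noncomputable section

def points : Finset ℝ := (Finset.range (P.m + 1)).image P.τ

def index (s : ℝ) : ℕ := Nat.findGreatest (P.τ · ≤ s) P.m

def floor (s : ℝ) : ℝ := P.τ (P.index s)

end

def MeshLT (δ : ℝ) : Prop := ∀ i < P.m, P.τ (i + 1) - P.τ i < δ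

def stieltjesSum {E F : Type*} [NormedAddCommGroup E] [NormedSpace ℝ E]
    [NormedAddCommGroup F] [NormedSpace ℝ F] (x : ℝ → E →L[ℝ] F) (y : ℝ → E) : F :=
  ∑ i ∈ Finset.range P.m, x (P.τ i) (y (P.τ (i + 1)) - y (P.τ i))

def OscillationLE {F : Type*} [PseudoMetricSpace F] (x : ℝ → F) (ε : ℝ) : Prop :=
  ∀ j < P.m, ∀ a ∈ Ioo (P.τ j) (P.τ (j + 1)), ∀ b ∈ Ioo (P.τ j) (P.τ (j + 1)),
    dist (x a) (x b) ≤ ε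

theorem strictMonoOn : StrictMonoOn P.τ (Iic P.m) :=
  strictMonoOn_Iic_of_lt_succ P.increasing

theorem monotoneOn : MonotoneOn P.τ (Iic P.m) := P.strictMonoOn.monotoneOn

theorem mem_Icc {i : ℕ} (hi : i ≤ P.m) : P.τ i ∈ Icc 0 t := by
  constructor
  · simpa [P.first] using P.monotoneOn (mem_Iic.2 (Nat.zero_le _)) (mem_Iic.2 hi) (Nat.zero_le i)
  · simpa [P.last] using P.monotoneOn (mem_Iic.2 hi) (mem_Iic.2 le_rfl) hi

theorem mem_Ico {i : ℕ} (hi : i < P.m) : P.τ i ∈ Ico 0 t :=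
  ⟨(P.mem_Icc hi.le).1,
    by simpa [P.last] using P.strictMonoOn (mem_Iic.2 hi.le) (mem_Iic.2 le_rfl) hi⟩

theorem mem_points {i : ℕ} (hi : i ≤ P.m) : P.τ i ∈ P.points :=
  Finset.mem_image_of_mem _ (Finset.mem_range.2 (Nat.lt_succ_of_le hi))

theorem mem_points_iff {s : ℝ} : s ∈ P.points ↔ ∃ i ≤ P.m, P.τ i = s := by
  simp [points]

theorem mem_Icc_of_mem_points {s : ℝ} (hs : s ∈ P.points) : s ∈ Icc 0 t := by
  obtain ⟨i, hi, rfl⟩ := P.mem_points_iff.1 hs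
  exact P.mem_Icc hi

theorem index_spec {s : ℝ} (hs : s ∈ Ico 0 t) :
    P.index s < P.m ∧ s ∈ Ico (P.τ (P.index s)) (P.τ (P.index s + 1)) := by
  have hle : P.τ (P.index s) ≤ s :=
    Nat.findGreatest_spec (P := (P.τ · ≤ s)) (Nat.zero_le _) (by simpa [P.first] using hs.1)
  have hlt : P.index s < P.m := by
    refine lt_of_le_of_ne (Nat.findGreatest_le _) fun h => ?_
    rw [h, P.last] at hle
    exact hs.2.not_ge hle
  exact ⟨hlt, hle, not_le.1 (Nat.findGreatest_is_greatest (Nat.lt_succ_self _) hlt)⟩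

theorem index_eq {s : ℝ} {j : ℕ} (hj : j < P.m) (hs : s ∈ Ico (P.τ j) (P.τ (j + 1))) :
    P.index s = j := by
  refine (Nat.findGreatest_eq_iff).2 ⟨hj.le, fun _ => hs.1, fun k hjk hk hks => ?_⟩
  exact hs.2.not_ge (hks.trans' (P.monotoneOn (mem_Iic.2 (Nat.succ_le_of_lt hjk |>.trans hk))
    (mem_Iic.2 hk) hjk))

theorem floor_mem_Icc {s : ℝ} (hs : s ∈ Ico 0 t) : P.floor s ∈ Icc 0 s :=
  ⟨(P.mem_Icc (P.index_spec hs).1.le).1, (P.index_spec hs).2.1⟩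

theorem MeshLT.mono {P : IntervalPartition t} {δ δ' : ℝ} (h : P.MeshLT δ) (hδ : δ ≤ δ') :
    P.MeshLT δ' :=
  fun i hi => (h i hi).trans_le hδ

end Basic

section Constructions

variable {s t : ℝ}

noncomputable def ofFinset (S : Finset ℝ) (hS : ↑S ⊆ Icc 0 t) (h0 : 0 ∈ S) (ht : t ∈ S)
    (hpos : 0 < t) : IntervalPartition t where
  m := S.card - 1
  τ i := if h : i < S.card then S.orderEmbOfFin rfl ⟨i, h⟩ else t
  m_pos := by
    have := Finset.one_lt_card.2 ⟨0, h0, t, ht, hpos.ne⟩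
    omega
  first := by
    have hpos : 0 < S.card := Finset.card_pos.2 ⟨0, h0⟩
    rw [dif_pos hpos, Finset.orderEmbOfFin_zero rfl hpos]
    exact le_antisymm (S.min'_le 0 h0) (hS (S.min'_mem _)).1
  last := by
    have hpos : 0 < S.card := Finset.card_pos.2 ⟨0, h0⟩
    rw [dif_pos (Nat.sub_lt hpos one_pos), Finset.orderEmbOfFin_last rfl hpos]
    exact le_antisymm (hS (S.max'_mem _)).2 (S.le_max' t ht)
  increasing i hi := by
    rw [dif_pos (by omega), dif_pos (by omega)]
    exact (S.orderEmbOfFin rfl).strictMono (Fin.mk_lt_mk.2 (Nat.lt_succ_self i))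

theorem points_ofFinset (S : Finset ℝ) (hS : ↑S ⊆ Icc 0 t) (h0 : 0 ∈ S) (ht : t ∈ S)
    (hpos : 0 < t) : (ofFinset S hS h0 ht hpos).points = S := by
  have hcard : S.card - 1 + 1 = S.card := Nat.sub_add_cancel (Finset.card_pos.2 ⟨0, h0⟩)
  ext a
  simp only [points, ofFinset, hcard, Finset.mem_image, Finset.mem_range]
  constructor
  · rintro ⟨i, hi, rfl⟩
    rw [dif_pos hi]
    exact S.orderEmbOfFin_mem rfl _
  · intro ha
    obtain ⟨⟨i, hi⟩, rfl⟩ : a ∈ Set.range (S.orderEmbOfFin rfl) := by simpa using ha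
    exact ⟨i, hi, dif_pos hi⟩

theorem exists_points_subset (ht : 0 < t) (σ σ' : IntervalPartition t) :
    ∃ ρ : IntervalPartition t, σ.points ⊆ ρ.points ∧ σ'.points ⊆ ρ.points := by
  classical
  have hS : ↑(σ.points ∪ σ'.points) ⊆ Icc 0 t := by
    intro s hs
    rcases Finset.mem_union.1 hs with hs | hs
    exacts [σ.mem_Icc_of_mem_points hs, σ'.mem_Icc_of_mem_points hs]
  refine ⟨ofFinset _ hS (Finset.mem_union_left _ ?_) (Finset.mem_union_left _ ?_) ht, ?_, ?_⟩
  · simpa [σ.first] using σ.mem_points (Nat.zero_le _)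
  · simpa [σ.last] using σ.mem_points le_rfl
  · rw [points_ofFinset]
    exact Finset.subset_union_left
  · rw [points_ofFinset]
    exact Finset.subset_union_right

noncomputable def uniform (ht : 0 < t) (n : ℕ) : IntervalPartition t where
  m := n + 1
  τ i := i * (t / (n + 1))
  m_pos := Nat.succ_pos n
  first := by simp
  last := by
    push_cast
    field_simp
  increasing i _ := by
    push_cast
    exact mul_lt_mul_of_pos_right (lt_add_one _) (by positivity)

theorem exists_meshLT_uniform (ht : 0 < t) {δ : ℝ} (hδ : 0 < δ) :
    ∃ n, (uniform ht n).MeshLT δ := by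
  obtain ⟨n, hn⟩ := exists_nat_gt (t / δ)
  refine ⟨n, fun i _ => ?_⟩
  have hstep : t / (n + 1) < δ := by
    rw [div_lt_iff₀ (by positivity)]
    rw [div_lt_iff₀ hδ] at hn
    linarith
  simp only [uniform]
  push_cast
  linarith

def single (hs : 0 < s) : IntervalPartition s where
  m := 1
  τ i := if i = 0 then 0 else s
  m_pos := one_pos
  first := if_pos rfl
  last := if_neg one_ne_zero
  increasing i hi := by
    obtain rfl : i = 0 := Nat.lt_one_iff.1 hi
    simpa using hs

def snoc (P : IntervalPartition s) (h : s < t) : IntervalPartition t where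
  m := P.m + 1
  τ i := if i ≤ P.m then P.τ i else t
  m_pos := Nat.succ_pos _
  first := by simp [P.first]
  last := by simp
  increasing i hi := by
    rcases (Nat.lt_succ_iff.1 hi).lt_or_eq with hi | rfl
    · simp only [hi.le, Nat.succ_le_of_lt hi, if_true]
      exact P.increasing i hi
    · simpa [P.last] using h

end Constructions

section Variation

variable {t : ℝ}

theorem eVariationOn_points {E : Type*} [PseudoEMetricSpace E] (P : IntervalPartition t)
    (y : ℝ → E) :
    eVariationOn y ↑P.points = ∑ i ∈ Finset.range P.m, edist (y (P.τ (i + 1))) (y (P.τ i)) := by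
  set v : ℕ → ℝ := fun i => P.τ (min i P.m)
  have hv : Monotone v := fun i j hij =>
    P.monotoneOn (mem_Iic.2 (min_le_right _ _)) (mem_Iic.2 (min_le_right _ _))
      (min_le_min_right _ hij)
  have himage : (↑P.points : Set ℝ) = v '' Iic P.m := by
    ext a
    simp only [points, Finset.coe_image, Finset.coe_range, mem_image, mem_Iio, mem_Iic,
      Nat.lt_succ_iff, v]
    exact exists_congr fun i => and_congr_right fun hi => by rw [min_eq_left hi]
  rw [himage, eVariationOn.image_range_of_monotone y hv]
  refine Finset.sum_congr rfl fun i hi => ?_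
  have hi : i < P.m := Finset.mem_range.1 hi
  simp only [v, min_eq_left hi.le, min_eq_left (Nat.succ_le_of_lt hi), edist_comm]

theorem sum_filter_norm_sub_le {E : Type*} [NormedAddCommGroup E] (P : IntervalPartition t)
    {y : ℝ → E} {a b : ℝ} (hab : a ≤ b) (hy : BoundedVariationOn y (Icc a b)) :
    ∑ i ∈ (Finset.range P.m).filter (fun i => a ≤ P.τ i ∧ P.τ (i + 1) ≤ b),
      ‖y (P.τ (i + 1)) - y (P.τ i)‖ ≤ (eVariationOn y (Icc a b)).toReal := by
  rw [← ENNReal.ofReal_le_iff_le_toReal hy, ENNReal.ofReal_sum_norm_sub]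
  set v : ℕ → ℝ := fun i => max a (min b (P.τ i))
  have hv : ∀ i, a ≤ P.τ i → P.τ i ≤ b → v i = P.τ i := fun i ha hb => by
    simp only [v, min_eq_right hb, max_eq_right ha]
  calc ∑ i ∈ (Finset.range P.m).filter (fun i => a ≤ P.τ i ∧ P.τ (i + 1) ≤ b),
        edist (y (P.τ (i + 1))) (y (P.τ i))
      = ∑ i ∈ (Finset.range P.m).filter (fun i => a ≤ P.τ i ∧ P.τ (i + 1) ≤ b),
          edist (y (v (i + 1))) (y (v i)) := by
        refine Finset.sum_congr rfl fun i hi => ?_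
        obtain ⟨hi, ha, hb⟩ := Finset.mem_filter.1 hi
        have hle : P.τ i ≤ P.τ (i + 1) := (P.increasing i (Finset.mem_range.1 hi)).le
        rw [hv i ha (hle.trans hb), hv (i + 1) (ha.trans hle) hb]
    _ ≤ ∑ i ∈ Finset.range P.m, edist (y (v (i + 1))) (y (v i)) :=
        Finset.sum_le_sum_of_subset (Finset.filter_subset _ _)
    _ ≤ eVariationOn y (Icc a b) :=
        eVariationOn.sum_le_of_monotoneOn_Iic
          (fun i hi j hj hij => max_le_max le_rfl (min_le_min le_rfl (P.monotoneOn hi hj hij)))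
          fun i _ => ⟨le_max_left _ _, max_le hab (min_le_left _ _)⟩

theorem sum_filter_exists_le_card_mul {E : Type*} [NormedAddCommGroup E]
    (ρ : IntervalPartition t) {y : ℝ → E} (hy : BoundedVariationOn y (Icc 0 t)) {C : Finset ℝ}
    (hC : ∀ p ∈ C, p ∈ Icc 0 t) {δ η : ℝ} (hδ : 0 < δ)
    (hη : ∀ p ∈ C, eVariationOn y (Icc p (min (p + δ) t)) < ENNReal.ofReal η)
    [DecidablePred fun i => ∃ p ∈ C, p ≤ ρ.τ i ∧ ρ.τ (i + 1) ≤ min (p + δ) t] :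
    ∑ i ∈ (Finset.range ρ.m).filter
        (fun i => ∃ p ∈ C, p ≤ ρ.τ i ∧ ρ.τ (i + 1) ≤ min (p + δ) t),
      ‖y (ρ.τ (i + 1)) - y (ρ.τ i)‖ ≤ C.card * η := by
  classical
  refine (Finset.sum_filter_exists_le _ _ _ fun i _ => norm_nonneg _).trans ?_
  rw [← nsmul_eq_mul, ← Finset.sum_const]
  refine Finset.sum_le_sum fun p hp => ?_
  have hpδ : p ≤ min (p + δ) t := le_min (by linarith) (hC p hp).2
  refine (ρ.sum_filter_norm_sub_le hpδ
    (hy.mono (Icc_subset_Icc (hC p hp).1 (min_le_right _ _)))).trans ?_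
  exact (ENNReal.toReal_lt_of_lt_ofReal (hη p hp)).le

end Variation

section Refinement

variable {t : ℝ} {E F : Type*} [NormedAddCommGroup E] [NormedSpace ℝ E] [NormedAddCommGroup F]
  [NormedSpace ℝ F]

theorem sum_filter_index_eq {G : Type*} [AddCommGroup G] {σ ρ : IntervalPartition t}
    (h : σ.points ⊆ ρ.points) (y : ℝ → G) {j : ℕ} (hj : j < σ.m) :
    ∑ i ∈ (Finset.range ρ.m).filter (fun i => σ.index (ρ.τ i) = j),
      (y (ρ.τ (i + 1)) - y (ρ.τ i)) = y (σ.τ (j + 1)) - y (σ.τ j) := by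
  obtain ⟨a, ha, hτa⟩ := ρ.mem_points_iff.1 (h (σ.mem_points hj.le))
  obtain ⟨b, hb, hτb⟩ := ρ.mem_points_iff.1 (h (σ.mem_points (i := j + 1) hj))
  have hmono := ρ.strictMonoOn
  have hfilter : (Finset.range ρ.m).filter (fun i => σ.index (ρ.τ i) = j) = Finset.Ico a b := by
    ext i
    simp only [Finset.mem_filter, Finset.mem_range, Finset.mem_Ico]
    constructor
    · rintro ⟨hi, rfl⟩
      obtain ⟨-, hlo, hhi⟩ := σ.index_spec (ρ.mem_Ico hi)
      rw [← hτa] at hlo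
      rw [← hτb] at hhi
      exact ⟨(hmono.le_iff_le (mem_Iic.2 ha) (mem_Iic.2 hi.le)).1 hlo,
        (hmono.lt_iff_lt (mem_Iic.2 hi.le) (mem_Iic.2 hb)).1 hhi⟩
    · rintro ⟨hai, hib⟩
      have hi : i < ρ.m := hib.trans_le hb
      refine ⟨hi, σ.index_eq hj ⟨?_, ?_⟩⟩
      · exact hτa ▸ (hmono.le_iff_le (mem_Iic.2 ha) (mem_Iic.2 hi.le)).2 hai
      · exact hτb ▸ (hmono.lt_iff_lt (mem_Iic.2 hi.le) (mem_Iic.2 hb)).2 hib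
  have hab : a ≤ b := ((hmono.lt_iff_lt (mem_Iic.2 ha) (mem_Iic.2 hb)).1
    (hτa ▸ hτb ▸ σ.increasing j hj)).le
  rw [hfilter, Finset.sum_Ico_sub (fun i => y (ρ.τ i)) hab, hτa, hτb]

theorem stieltjesSum_eq_of_points_subset {σ ρ : IntervalPartition t} (h : σ.points ⊆ ρ.points)
    (x : ℝ → E →L[ℝ] F) (y : ℝ → E) :
    σ.stieltjesSum x y = ρ.stieltjesSum (fun s => x (σ.floor s)) y := by
  classical
  have hmaps : ∀ i ∈ Finset.range ρ.m, σ.index (ρ.τ i) ∈ Finset.range σ.m := fun i hi =>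
    Finset.mem_range.2 (σ.index_spec (ρ.mem_Ico (Finset.mem_range.1 hi))).1
  rw [stieltjesSum, stieltjesSum, ← Finset.sum_fiberwise_of_maps_to hmaps]
  refine Finset.sum_congr rfl fun j hj => ?_
  rw [← sum_filter_index_eq h y (Finset.mem_range.1 hj), map_sum]
  refine Finset.sum_congr rfl fun i hi => ?_
  rw [floor, (Finset.mem_filter.1 hi).2]

theorem lt_floor_add_of_meshLT {σ ρ : IntervalPartition t} (h : σ.points ⊆ ρ.points) {δ : ℝ}
    (hσ : σ.MeshLT δ) {i : ℕ} (hi : i < ρ.m) : ρ.τ (i + 1) < σ.floor (ρ.τ i) + δ := by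
  obtain ⟨hj, -, hhi⟩ := σ.index_spec (ρ.mem_Ico hi)
  obtain ⟨b, hb, hτb⟩ := ρ.mem_points_iff.1 (h (σ.mem_points (i := σ.index (ρ.τ i) + 1) hj))
  rw [← hτb] at hhi
  have hib : i + 1 ≤ b := (ρ.strictMonoOn.lt_iff_lt (mem_Iic.2 hi.le) (mem_Iic.2 hb)).1 hhi
  calc ρ.τ (i + 1) ≤ ρ.τ b := ρ.monotoneOn (mem_Iic.2 (hib.trans hb)) (mem_Iic.2 hb) hib
    _ = σ.τ (σ.index (ρ.τ i) + 1) := hτb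
    _ < σ.floor (ρ.τ i) + δ := by
        have := hσ _ hj
        rw [floor]
        linarith

theorem norm_stieltjesSum_le (P : IntervalPartition t) (x : ℝ → E →L[ℝ] F) (y : ℝ → E) :
    ‖P.stieltjesSum x y‖ ≤
      ∑ i ∈ Finset.range P.m, ‖x (P.τ i)‖ * ‖y (P.τ (i + 1)) - y (P.τ i)‖ :=
  (norm_sum_le _ _).trans (Finset.sum_le_sum fun i _ => (x (P.τ i)).le_opNorm _)

theorem stieltjesSum_sub (P : IntervalPartition t) (x x' : ℝ → E →L[ℝ] F) (y : ℝ → E) :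
    P.stieltjesSum x y - P.stieltjesSum x' y = P.stieltjesSum (x - x') y := by
  simp only [stieltjesSum, ← Finset.sum_sub_distrib, Pi.sub_apply, sub_apply]

end Refinement

section Oscillation

variable {s t : ℝ} {F : Type*} [PseudoMetricSpace F] {x : ℝ → F} {ε : ℝ}

theorem oscillationLE_single (hs : 0 < s)
    (h : ∀ a ∈ Ioo 0 s, ∀ b ∈ Ioo 0 s, dist (x a) (x b) ≤ ε) :
    (single hs).OscillationLE x ε := by
  intro j hj
  obtain rfl : j = 0 := Nat.lt_one_iff.1 hj
  simpa [single] using h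

theorem OscillationLE.snoc {P : IntervalPartition s} (hP : P.OscillationLE x ε) (hst : s < t)
    (h : ∀ a ∈ Ioo s t, ∀ b ∈ Ioo s t, dist (x a) (x b) ≤ ε) :
    (P.snoc hst).OscillationLE x ε := by
  intro j hj
  rcases (Nat.lt_succ_iff.1 hj).lt_or_eq with hj | rfl
  · simpa [IntervalPartition.snoc, hj.le, Nat.succ_le_of_lt hj] using hP j hj
  · simpa [IntervalPartition.snoc, P.last] using h

theorem OscillationLE.dist_le {P : IntervalPartition t} (hP : P.OscillationLE x ε) {a b : ℝ}
    (ha : 0 ≤ a) (hab : a ≤ b) (hb : b ≤ t) (h : ∀ p ∈ P.points, p ∉ Icc a b) :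
    dist (x a) (x b) ≤ ε := by
  have hat : a < t := by
    refine lt_of_le_of_ne (hab.trans hb) fun hat => h t ?_ ⟨hat.le, hat ▸ hab⟩
    simpa [P.last] using P.mem_points le_rfl
  obtain ⟨hj, hlo, hhi⟩ := P.index_spec ⟨ha, hat⟩
  set j := P.index a
  have hlo' : P.τ j < a := lt_of_le_of_ne hlo fun he => h _ (P.mem_points hj.le) ⟨he.ge, he ▸ hab⟩
  have hhi' : b < P.τ (j + 1) :=
    not_le.1 fun hb' => h _ (P.mem_points (Nat.succ_le_of_lt hj)) ⟨hhi.le, hb'⟩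
  exact hP j hj a ⟨hlo', hhi⟩ b ⟨hlo'.trans_le hab, hhi'⟩

/-- `σ.floor ρᵢ` and `ρᵢ` lie in one open interval of `U`: a point of `U` between them would put
`[ρᵢ, ρᵢ₊₁]` within `δ` to its right. -/
theorem OscillationLE.dist_floor_le {U σ ρ : IntervalPartition t} (hU : U.OscillationLE x ε)
    (h : σ.points ⊆ ρ.points) {δ : ℝ} (hσ : σ.MeshLT δ) {i : ℕ} (hi : i < ρ.m)
    (hfar : ¬∃ p ∈ U.points, p ≤ ρ.τ i ∧ ρ.τ (i + 1) ≤ min (p + δ) t) :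
    dist (x (σ.floor (ρ.τ i))) (x (ρ.τ i)) ≤ ε := by
  have hfl := σ.floor_mem_Icc (ρ.mem_Ico hi)
  refine hU.dist_le hfl.1 hfl.2 (ρ.mem_Icc hi.le).2 fun p hp hpI =>
    hfar ⟨p, hp, hpI.2, le_min ?_ (ρ.mem_Icc hi).2⟩
  linarith [lt_floor_add_of_meshLT h hσ hi, hpI.1]

end Oscillation

end IntervalPartition

open IntervalPartition

theorem eVariationOn_Icc_le_of_forall_partition {E : Type*} [NormedAddCommGroup E] {t V : ℝ}
    {y : ℝ → E} (ht : 0 < t)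
    (hV : ∀ P : IntervalPartition t,
      ∑ i ∈ Finset.range P.m, ‖y (P.τ (i + 1)) - y (P.τ i)‖ ≤ V) :
    eVariationOn y (Icc 0 t) ≤ ENNReal.ofReal V := by
  classical
  refine iSup_le fun ⟨n, u, hu, hmem⟩ => ?_
  set S : Finset ℝ := insert 0 (insert t ((Finset.range (n + 1)).image u))
  have hS : ↑S ⊆ Icc 0 t := by
    intro a ha
    simp only [S, Finset.coe_insert, Finset.coe_image, mem_insert_iff, mem_image] at ha
    rcases ha with rfl | rfl | ⟨i, -, rfl⟩
    exacts [left_mem_Icc.2 ht.le, right_mem_Icc.2 ht.le, hmem i]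
  set P := ofFinset S hS (by simp [S]) (by simp [S]) ht
  calc ∑ i ∈ Finset.range n, edist (y (u (i + 1))) (y (u i))
      ≤ eVariationOn y ↑S :=
        eVariationOn.sum_le_of_monotoneOn_Iic (hu.monotoneOn _)
          fun i hi => Finset.mem_insert_of_mem <| Finset.mem_insert_of_mem <|
            Finset.mem_image_of_mem u (Finset.mem_range.2 (Nat.lt_succ_of_le hi))
    _ = ∑ i ∈ Finset.range P.m, edist (y (P.τ (i + 1))) (y (P.τ i)) := by
        rw [← P.eVariationOn_points, points_ofFinset]
    _ = ENNReal.ofReal (∑ i ∈ Finset.range P.m, ‖y (P.τ (i + 1)) - y (P.τ i)‖) :=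
        (ENNReal.ofReal_sum_norm_sub _ _ _).symm
    _ ≤ ENNReal.ofReal V := ENNReal.ofReal_le_ofReal (hV P)

namespace IsCadlag

variable {F : Type*} [PseudoMetricSpace F] {x : ℝ → F}

theorem exists_Ico_dist_le (hx : IsCadlag x) {s ε : ℝ} (hs : 0 ≤ s) (hε : 0 < ε) :
    ∃ u > s, ∀ a ∈ Ico s u, ∀ b ∈ Ico s u, dist (x a) (x b) ≤ ε := by
  obtain ⟨S, hS, hosc⟩ := (hx.1 s hs).tendsto.exists_mem_forall_dist_le hε
  obtain ⟨u, hu, hsub⟩ := mem_nhdsGE_iff_exists_Ico_subset.1 hS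
  exact ⟨u, hu, fun a ha b hb => hosc a (hsub ha) b (hsub hb)⟩

theorem exists_Ioo_dist_le (hx : IsCadlag x) {s ε : ℝ} (hs : 0 < s) (hε : 0 < ε) :
    ∃ l < s, ∀ a ∈ Ioo l s, ∀ b ∈ Ioo l s, dist (x a) (x b) ≤ ε := by
  obtain ⟨L, hL⟩ := hx.2 s hs
  obtain ⟨S, hS, hosc⟩ := hL.exists_mem_forall_dist_le hε
  obtain ⟨l, hl, hsub⟩ := mem_nhdsLT_iff_exists_Ioo_subset.1 hS
  exact ⟨l, hl, fun a ha b hb => hosc a (hsub ha) b (hsub hb)⟩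

/-- The supremum of the `s ≤ t` for which `[0, s]` has such a partition is attained, by the left
limit at it, and equals `t`, by right continuity there. -/
theorem exists_oscillationLE (hx : IsCadlag x) {t ε : ℝ} (ht : 0 < t) (hε : 0 < ε) :
    ∃ P : IntervalPartition t, P.OscillationLE x ε := by
  set A := {s | s ∈ Ioc 0 t ∧ ∃ P : IntervalPartition s, P.OscillationLE x ε}
  have hA : BddAbove A := ⟨t, fun s hs => hs.1.2⟩
  obtain ⟨u₀, hu₀, hosc₀⟩ := hx.exists_Ico_dist_le le_rfl hε
  have hs₀ : min u₀ t ∈ A := by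
    have hpos : 0 < min u₀ t := lt_min hu₀ ht
    refine ⟨⟨hpos, min_le_right _ _⟩, single hpos,
      oscillationLE_single hpos fun a ha b hb => hosc₀ a ?_ b ?_⟩
    exacts [⟨ha.1.le, ha.2.trans_le (min_le_left _ _)⟩, ⟨hb.1.le, hb.2.trans_le (min_le_left _ _)⟩]
  set c := sSup A
  have hc_pos : 0 < c := hs₀.1.1.trans_le (le_csSup hA hs₀)
  have hc_le : c ≤ t := csSup_le ⟨_, hs₀⟩ fun s hs => hs.1.2
  have hcA : ∃ P : IntervalPartition c, P.OscillationLE x ε := by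
    obtain ⟨l, hl, hosc⟩ := hx.exists_Ioo_dist_le hc_pos hε
    obtain ⟨s, hsA, hls⟩ := exists_lt_of_lt_csSup ⟨_, hs₀⟩ hl
    rcases (le_csSup hA hsA).lt_or_eq with hsc | hsc
    · obtain ⟨P, hP⟩ := hsA.2
      refine ⟨P.snoc hsc, hP.snoc hsc fun a ha b hb => hosc a ?_ b ?_⟩
      exacts [⟨hls.trans ha.1, ha.2⟩, ⟨hls.trans hb.1, hb.2⟩]
    · exact (show s = c from hsc) ▸ hsA.2
  rcases hc_le.lt_or_eq with hct | hct
  · obtain ⟨u, hu, hosc⟩ := hx.exists_Ico_dist_le hc_pos.le hε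
    obtain ⟨P, hP⟩ := hcA
    have hc' : c < min u t := lt_min hu hct
    have hmem : min u t ∈ A := by
      refine ⟨⟨hc_pos.trans hc', min_le_right _ _⟩, P.snoc hc',
        hP.snoc hc' fun a ha b hb => hosc a ?_ b ?_⟩
      exacts [⟨ha.1.le, ha.2.trans_le (min_le_left _ _)⟩,
        ⟨hb.1.le, hb.2.trans_le (min_le_left _ _)⟩]
    exact absurd (le_csSup hA hmem) hc'.not_ge
  · exact hct ▸ hcA

end IsCadlag

theorem IsCadlag.exists_norm_le {F : Type*} [NormedAddCommGroup F] {x : ℝ → F} (hx : IsCadlag x)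
    {t : ℝ} (ht : 0 < t) : ∃ M, ∀ s ∈ Icc 0 t, ‖x s‖ ≤ M := by
  obtain ⟨P, hP⟩ := hx.exists_oscillationLE ht one_pos
  set mid : ℕ → ℝ := fun j => (P.τ j + P.τ (j + 1)) / 2
  set M := ∑ j ∈ Finset.range (P.m + 1), (‖x (P.τ j)‖ + ‖x (mid j)‖)
  have hterm : ∀ j ≤ P.m, ‖x (P.τ j)‖ + ‖x (mid j)‖ ≤ M := fun j hj =>
    Finset.single_le_sum (f := fun j => ‖x (P.τ j)‖ + ‖x (mid j)‖)
      (fun _ _ => by positivity) (Finset.mem_range.2 (Nat.lt_succ_of_le hj))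
  refine ⟨M + 1, fun s hs => ?_⟩
  rcases hs.2.lt_or_eq with hst | rfl
  · obtain ⟨hj, hlo, hhi⟩ := P.index_spec ⟨hs.1, hst⟩
    set j := P.index s
    rcases hlo.eq_or_lt with heq | hlt
    · linarith [heq ▸ hterm j hj.le, norm_nonneg (x (mid j))]
    · have hmid : mid j ∈ Ioo (P.τ j) (P.τ (j + 1)) := by
        constructor <;> simp only [mid] <;> linarith [P.increasing j hj]
      have hdist := hP j hj s ⟨hlt, hhi⟩ (mid j) hmid
      rw [dist_eq_norm] at hdist
      linarith [norm_le_norm_add_norm_sub' (x s) (x (mid j)), hterm j hj.le,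
        norm_nonneg (x (P.τ j))]
  · linarith [P.last ▸ hterm P.m le_rfl, norm_nonneg (x (mid P.m))]

theorem norm_stieltjesSum_sub_le_of_points_subset {E F : Type*} [NormedAddCommGroup E]
    [NormedSpace ℝ E] [NormedAddCommGroup F] [NormedSpace ℝ F] {t M δ ε₁ ε₂ : ℝ}
    {x : ℝ → E →L[ℝ] F} {y : ℝ → E} {U σ ρ : IntervalPartition t}
    (hM : ∀ s ∈ Icc 0 t, ‖x s‖ ≤ M) (hU : U.OscillationLE x ε₁) (hε₁ : 0 ≤ ε₁)
    (hy : BoundedVariationOn y (Icc 0 t)) (hδ : 0 < δ)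
    (hvar : ∀ p ∈ U.points, eVariationOn y (Icc p (min (p + δ) t)) < ENNReal.ofReal ε₂)
    (hσ : σ.MeshLT δ) (hsub : σ.points ⊆ ρ.points) :
    ‖σ.stieltjesSum x y - ρ.stieltjesSum x y‖ ≤
      2 * M * (U.points.card * ε₂) + ε₁ * (eVariationOn y (Icc 0 t)).toReal := by
  classical
  have ht : 0 ≤ t := by simpa [ρ.last] using (ρ.mem_Icc le_rfl).1
  have hM0 : 0 ≤ M := (norm_nonneg _).trans (hM 0 ⟨le_rfl, ht⟩)
  set Δ : ℕ → ℝ := fun i => ‖y (ρ.τ (i + 1)) - y (ρ.τ i)‖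
  set Near : ℕ → Prop := fun i => ∃ p ∈ U.points, p ≤ ρ.τ i ∧ ρ.τ (i + 1) ≤ min (p + δ) t
  have hterm : ∀ i ∈ Finset.range ρ.m, ‖x (σ.floor (ρ.τ i)) - x (ρ.τ i)‖ * Δ i ≤
      (if Near i then 2 * M * Δ i else 0) + ε₁ * Δ i := by
    intro i hi
    have hi : i < ρ.m := Finset.mem_range.1 hi
    have hΔ : 0 ≤ Δ i := norm_nonneg _
    by_cases hnear : Near i
    · have hfl := σ.floor_mem_Icc (ρ.mem_Ico hi)
      have hx2 : ‖x (σ.floor (ρ.τ i)) - x (ρ.τ i)‖ ≤ 2 * M := by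
        linarith [norm_sub_le (x (σ.floor (ρ.τ i))) (x (ρ.τ i)),
          hM _ ⟨hfl.1, hfl.2.trans (ρ.mem_Icc hi.le).2⟩, hM _ (ρ.mem_Icc hi.le)]
      rw [if_pos hnear]
      nlinarith [mul_le_mul_of_nonneg_right hx2 hΔ, mul_nonneg hε₁ hΔ]
    · rw [if_neg hnear, zero_add, ← dist_eq_norm]
      exact mul_le_mul_of_nonneg_right (hU.dist_floor_le hsub hσ hi hnear) hΔ
  have htotal : ∑ i ∈ Finset.range ρ.m, Δ i ≤ (eVariationOn y (Icc 0 t)).toReal := by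
    have hall : (Finset.range ρ.m).filter (fun i => 0 ≤ ρ.τ i ∧ ρ.τ (i + 1) ≤ t) =
        Finset.range ρ.m := Finset.filter_true_of_mem fun i hi =>
      ⟨(ρ.mem_Icc (Finset.mem_range.1 hi).le).1, (ρ.mem_Icc (Finset.mem_range.1 hi)).2⟩
    simpa only [hall] using ρ.sum_filter_norm_sub_le ht hy
  have hnear : ∑ i ∈ (Finset.range ρ.m).filter Near, Δ i ≤ U.points.card * ε₂ :=
    ρ.sum_filter_exists_le_card_mul hy (fun p hp => U.mem_Icc_of_mem_points hp) hδ hvar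
  calc ‖σ.stieltjesSum x y - ρ.stieltjesSum x y‖
      = ‖ρ.stieltjesSum (fun s => x (σ.floor s) - x s) y‖ := by
        rw [stieltjesSum_eq_of_points_subset hsub, stieltjesSum_sub]
        rfl
    _ ≤ ∑ i ∈ Finset.range ρ.m, ‖x (σ.floor (ρ.τ i)) - x (ρ.τ i)‖ * Δ i :=
        ρ.norm_stieltjesSum_le _ y
    _ ≤ ∑ i ∈ Finset.range ρ.m, ((if Near i then 2 * M * Δ i else 0) + ε₁ * Δ i) :=
        Finset.sum_le_sum hterm
    _ = 2 * M * ∑ i ∈ (Finset.range ρ.m).filter Near, Δ i + ε₁ * ∑ i ∈ Finset.range ρ.m, Δ i := by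
        rw [Finset.sum_add_distrib, ← Finset.sum_filter, Finset.mul_sum, Finset.mul_sum]
    _ ≤ 2 * M * (U.points.card * ε₂) + ε₁ * (eVariationOn y (Icc 0 t)).toReal := by
        gcongr

theorem exists_norm_stieltjesSum_sub_le_of_points_subset {E F : Type*} [NormedAddCommGroup E]
    [NormedSpace ℝ E] [NormedAddCommGroup F] [NormedSpace ℝ F] {t : ℝ} (ht : 0 < t)
    {x : ℝ → E →L[ℝ] F} (hx : IsCadlag x) {y : ℝ → E} (hy : BoundedVariationOn y (Icc 0 t))
    (hyc : ∀ s, 0 ≤ s → ContinuousWithinAt y (Ici s) s) {ε : ℝ} (hε : 0 < ε) :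
    ∃ δ > 0, ∀ σ ρ : IntervalPartition t, σ.MeshLT δ → σ.points ⊆ ρ.points →
      ‖σ.stieltjesSum x y - ρ.stieltjesSum x y‖ ≤ ε := by
  obtain ⟨M, hM⟩ := hx.exists_norm_le ht
  have hM0 : 0 ≤ M := (norm_nonneg _).trans (hM 0 ⟨le_rfl, ht.le⟩)
  set W := (eVariationOn y (Icc 0 t)).toReal
  set ε₁ := ε / (2 * (W + 1))
  obtain ⟨U, hU⟩ := hx.exists_oscillationLE ht (by positivity : 0 < ε₁)
  set K := 2 * M * U.points.card
  set ε₂ := ε / (2 * (K + 1))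
  have hsmall : ∀ᶠ D in 𝓝[>] 0, ∀ p ∈ U.points,
      eVariationOn y (Icc p (min (p + D) t)) < ENNReal.ofReal ε₂ := by
    refine (Filter.eventually_all_finset _).2 fun p hp => ?_
    have hpt := U.mem_Icc_of_mem_points hp
    exact hy.eventually_eVariationOn_Icc_lt hpt (hyc p hpt.1) (ENNReal.ofReal_pos.2 (by positivity))
  obtain ⟨δ, hvar, hδ⟩ := (hsmall.and self_mem_nhdsWithin).exists
  refine ⟨δ, hδ, fun σ ρ hσ hsub => ?_⟩
  calc ‖σ.stieltjesSum x y - ρ.stieltjesSum x y‖ ≤ K * ε₂ + ε₁ * W := by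
        simpa only [K, mul_assoc] using
          norm_stieltjesSum_sub_le_of_points_subset hM hU (by positivity) hy hδ hvar hσ hsub
    _ ≤ ε / 2 + ε / 2 := add_le_add (mul_div_two_mul_add_one_le (by positivity) hε.le)
        (by rw [mul_comm]; exact mul_div_two_mul_add_one_le ENNReal.toReal_nonneg hε.le)
    _ = ε := add_halves ε

def meshFilter (t : ℝ) : Filter (IntervalPartition t) :=
  ⨅ δ ∈ Ioi (0 : ℝ), 𝓟 {P | P.MeshLT δ}

theorem hasBasis_meshFilter (t : ℝ) :
    (meshFilter t).HasBasis (fun δ => δ ∈ Ioi (0 : ℝ)) fun δ => {P | P.MeshLT δ} := by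
  refine hasBasis_biInf_principal
    (fun δ₁ h₁ δ₂ h₂ => ⟨min δ₁ δ₂, mem_Ioi.2 (lt_min h₁ h₂), ?_, ?_⟩) ⟨1, mem_Ioi.2 one_pos⟩
  exacts [fun P hP => hP.mono (min_le_left _ _), fun P hP => hP.mono (min_le_right _ _)]

theorem neBot_meshFilter {t : ℝ} (ht : 0 < t) : (meshFilter t).NeBot :=
  (hasBasis_meshFilter t).neBot_iff.2 fun hδ =>
    let ⟨n, hn⟩ := exists_meshLT_uniform ht hδ
    ⟨uniform ht n, hn⟩

theorem cauchy_map_stieltjesSum {E F : Type*} [NormedAddCommGroup E] [NormedSpace ℝ E]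
    [NormedAddCommGroup F] [NormedSpace ℝ F] {t : ℝ} (ht : 0 < t) {x : ℝ → E →L[ℝ] F}
    (hx : IsCadlag x) {y : ℝ → E} (hy : BoundedVariationOn y (Icc 0 t))
    (hyc : ∀ s, 0 ≤ s → ContinuousWithinAt y (Ici s) s) :
    Cauchy (map (fun P => P.stieltjesSum x y) (meshFilter t)) := by
  have := neBot_meshFilter ht
  refine Metric.cauchy_iff.2 ⟨inferInstance, fun ε hε => ?_⟩
  obtain ⟨δ, hδ, hclose⟩ :=
    exists_norm_stieltjesSum_sub_le_of_points_subset ht hx hy hyc (by positivity : 0 < ε / 3)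
  refine ⟨_, image_mem_map ((hasBasis_meshFilter t).mem_of_mem hδ), ?_⟩
  rintro _ ⟨σ, hσ, rfl⟩ _ ⟨σ', hσ', rfl⟩
  obtain ⟨ρ, hρ, hρ'⟩ := exists_points_subset ht σ σ'
  calc dist (σ.stieltjesSum x y) (σ'.stieltjesSum x y)
      ≤ dist (σ.stieltjesSum x y) (ρ.stieltjesSum x y) +
          dist (σ'.stieltjesSum x y) (ρ.stieltjesSum x y) := dist_triangle_right _ _ _
    _ ≤ ε / 3 + ε / 3 := by
        rw [dist_eq_norm, dist_eq_norm]
        exact add_le_add (hclose σ ρ hσ hρ) (hclose σ' ρ hσ' hρ')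
    _ < ε := by linarith

theorem riemann_stieltjes_sums_converge_operator_valued_general
    {X Y : Type*} [NormedAddCommGroup X] [NormedSpace ℝ X]
    [NormedAddCommGroup Y] [NormedSpace ℝ Y] [CompleteSpace Y]
    (t : ℝ) (ht : 0 < t)
    (x : ℝ → ((X →L[ℝ] ℝ) →L[ℝ] Y)) (hx : IsCadlag x)
    (ystar : ℝ → (X →L[ℝ] ℝ)) (hy : IsCadlag ystar)
    (V : ℝ)
    (hV : ∀ σ : IntervalPartition t,
      ∑ i ∈ Finset.range σ.m, ‖ystar (σ.τ (i + 1)) - ystar (σ.τ i)‖ ≤ V) :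
    ∃ L : Y, ∀ ε : ℝ, 0 < ε → ∃ δ : ℝ, 0 < δ ∧
      ∀ σ : IntervalPartition t, (∀ i < σ.m, σ.τ (i + 1) - σ.τ i < δ) →
        ‖(∑ i ∈ Finset.range σ.m,
            x (σ.τ i) (ystar (σ.τ (i + 1)) - ystar (σ.τ i))) - L‖ < ε := by
  have hbv : BoundedVariationOn ystar (Icc 0 t) :=
    ne_top_of_le_ne_top ENNReal.ofReal_ne_top (eVariationOn_Icc_le_of_forall_partition ht hV)
  obtain ⟨L, hL⟩ := CompleteSpace.complete (cauchy_map_stieltjesSum ht hx hbv hy.1)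
  refine ⟨L, fun ε hε => ?_⟩
  obtain ⟨δ, hδ, hclose⟩ := ((hasBasis_meshFilter t).tendsto_iff Metric.nhds_basis_ball).1 hL ε hε
  exact ⟨δ, hδ, fun σ hσ => by
    rw [← dist_eq_norm]
    exact hclose σ hσ⟩

/-- Convergence of operator-valued left-endpoint Riemann–Stieltjes sums: if
`x : [0,∞) → L(X*,Y)` is cadlag and `y* : [0,∞) → X*` is cadlag with finite total
variation on `[0,t]`, then the `Y`-valued sums `∑ x(t_i)(y*(t_{i+1}) − y*(t_i))`
converge as the mesh goes to `0`. -/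
theorem riemann_stieltjes_sums_converge_operator_valued
    {X Y : Type*} [NormedAddCommGroup X] [NormedSpace ℝ X] [CompleteSpace X]
    [NormedAddCommGroup Y] [NormedSpace ℝ Y] [CompleteSpace Y]
    (t : ℝ) (ht : 0 < t)
    (x : ℝ → ((X →L[ℝ] ℝ) →L[ℝ] Y)) (hx : IsCadlag x)
    (ystar : ℝ → (X →L[ℝ] ℝ)) (hy : IsCadlag ystar)
    (V : ℝ)
    (hV : ∀ σ : IntervalPartition t,
      ∑ i ∈ Finset.range σ.m, ‖ystar (σ.τ (i + 1)) - ystar (σ.τ i)‖ ≤ V) :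
    ∃ L : Y, ∀ ε : ℝ, 0 < ε → ∃ δ : ℝ, 0 < δ ∧
      ∀ σ : IntervalPartition t, (∀ i < σ.m, σ.τ (i + 1) - σ.τ i < δ) →
        ‖(∑ i ∈ Finset.range σ.m,
            x (σ.τ i) (ystar (σ.τ (i + 1)) - ystar (σ.τ i))) - L‖ < ε :=
  riemann_stieltjes_sums_converge_operator_valued_general t ht x hx ystar hy V hV
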